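/- The set I consisting of 0 together with all constants c_T ∈ R appearing as σ^{r−k}(lc_∂(T)) = c_T · g over all desingularized operators T for L (of any order k), where g is the fixed primitive polynomial p_1^{e_1−k_1}···p_m^{e_m−k_m}, is an ideal of R. In particular, since R is a PID, there is a desingularized operator whose constant c divides c_T for every desingularized operator T (a completely desingularized operator exists). -/

import Mathlib

open Polynomial

noncomputable section

/-- `Q_R(x)`, the field of rational functions over the fraction field `Q_R` of `R`,
realized as the fraction field of `R[x]`. -/
abbrev QX (R : Type) [CommRing R] [IsDomain R] := FractionRing (Polynomial R)

/-- Data of an Ore algebra `R[x][∂; σ, δ] ⊆ Q_R(x)[∂; σ, δ]`.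
The ring `A` plays the role of `Q_R(x)[∂]`; `ι` embeds the coefficient field,
`D` is the Ore variable `∂`, subject to the commutation rule `∂·p = σ(p)·∂ + δ(p)`,
and every element of `A` has a unique finite coefficient expansion `Σ ι(cᵢ)·∂^i`. -/
structure OreAlg (R : Type) [CommRing R] [IsDomain R] (A : Type) [Ring A] where
  σ : Polynomial R ≃+* Polynomial R
  σ_fix : ∀ r : R, σ (C r) = C r
  δ : Polynomial R → Polynomial R
  δ_add : ∀ f g, δ (f + g) = δ f + δ g
  δ_linear : ∀ (r : R) (f), δ (C r * f) = C r * δ f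
  ι : QX R →+* A
  ι_inj : Function.Injective ι
  D : A
  comm_rule : ∀ p : Polynomial R,
    D * ι (algebraMap (Polynomial R) (QX R) p)
      = ι (algebraMap (Polynomial R) (QX R) (σ p)) * D
        + ι (algebraMap (Polynomial R) (QX R) (δ p))
  δ_leibniz : ∀ f g, δ (f * g) = σ f * δ g + δ f * g
  coeff : A → ℕ → QX R
  coeff_inj : ∀ P Q : A, (∀ i, coeff P i = coeff Q i) → P = Q
  coeff_add : ∀ P Q i, coeff (P + Q) i = coeff P i + coeff Q i
  coeff_smul : ∀ (f : QX R) (P : A) (i), coeff (ι f * P) i = f * coeff P i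
  coeff_bdd : ∀ P : A, ∃ N, ∀ i, N < i → coeff P i = 0
  coeff_mk : ∀ (N : ℕ) (c : ℕ → QX R), (∀ i, N < i → c i = 0) →
    ∀ j, coeff (∑ i ∈ Finset.range (N + 1), ι (c i) * D ^ i) j = c j

namespace OreAlg

variable {R : Type} [CommRing R] [IsDomain R] {A : Type} [Ring A] (O : OreAlg R A)

/-- The embedding of `R[x]` into the Ore algebra. -/
def ιp (f : Polynomial R) : A := O.ι (algebraMap (Polynomial R) (QX R) f)

/-- The `i`-th `∂`-coefficient of `P` lies in `R[x]`. -/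
def PolyCoeff (P : A) (i : ℕ) : Prop :=
  ∃ f : Polynomial R, O.coeff P i = algebraMap (Polynomial R) (QX R) f

/-- `P` belongs to the subring `R[x][∂]` of `Q_R(x)[∂]`. -/
def InB (P : A) : Prop := ∀ i, O.PolyCoeff P i

/-- The order (degree in `∂`) of an operator. -/
def ord (P : A) : ℕ := sSup {i | O.coeff P i ≠ 0}

/-- The leading coefficient (with respect to `∂`), in `Q_R(x)`. -/
def lc (P : A) : QX R := O.coeff P (O.ord P)

/-- The contraction ideal `cont(L) = Q_R(x)[∂]·L ∩ R[x][∂]`. -/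
def cont (L : A) : Set A := {P | O.InB P ∧ ∃ Q : A, P = Q * L}

/-- The `k`-th submodule `M_k(L) = {P ∈ cont(L) : deg_∂ P ≤ k}`. -/
def M (L : A) (k : ℕ) : Set A := {P | P ∈ O.cont L ∧ O.ord P ≤ k}

/-- The `k`-th coefficient ideal `I_k = {[∂^k]P : P ∈ M_k} ∪ {0}` (as a set of
polynomials; `0` arises from `P = 0`). -/
def Icoeff (L : A) (k : ℕ) : Set (Polynomial R) :=
  {f | ∃ P ∈ O.M L k, O.coeff P k = algebraMap (Polynomial R) (QX R) f}

end OreAlg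

/-- `gcd(p, w) = 1` in `R[x]`: every common divisor is a unit. -/
def Copr {R : Type} [CommRing R] (p w : Polynomial R) : Prop :=
  ∀ d : Polynomial R, d ∣ p → d ∣ w → IsUnit d

namespace OreAlg

variable {R : Type} [CommRing R] [IsDomain R] {A : Type} [Ring A] (O : OreAlg R A)

/-- `P` is a `p`-removing operator for `L` over `R[x]`, of order `k`:
`P·L ∈ R[x][∂]` and `σ^{-k}(lc_∂(P·L)) = (w/(v·p))·lc_∂(L)` with `gcd(p, w) = 1`. -/
def IsRemoving (L : A) (p : Polynomial R) (k : ℕ) (P : A) : Prop :=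
  O.ord P = k ∧ O.InB (P * L) ∧
  ∃ w v t l : Polynomial R, v ≠ 0 ∧ Copr p w ∧
    O.lc (P * L) = algebraMap (Polynomial R) (QX R) t ∧
    O.lc L = algebraMap (Polynomial R) (QX R) l ∧
    (⇑O.σ.symm)^[k] t * (v * p) = w * l

/-- `p` is removable from `L` (at some order). -/
def Removable (L : A) (p : Polynomial R) : Prop :=
  ∃ k P, O.IsRemoving L p k P

/-- Factorization data for `lc_∂(L) = c·p₁^{e₁}⋯p_m^{e_m}`, with `c ∈ R` and the
`pᵢ ∈ R[x] \ R` irreducible and pairwise coprime; `L` has order `r > 0`. -/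
def Factored (L : A) (r m : ℕ) (c : R) (p : Fin m → Polynomial R)
    (e : Fin m → ℕ) : Prop :=
  O.ord L = r ∧ 0 < r ∧ c ≠ 0 ∧
  O.lc L = algebraMap (Polynomial R) (QX R) (C c * ∏ i, p i ^ e i) ∧
  (∀ i, Irreducible (p i) ∧ 0 < (p i).natDegree) ∧
  (∀ i j, i ≠ j → Copr (p i) (p j))

/-- `T` is a desingularized operator for `L`: `T ∈ cont(L)` and
`σ^{r-k}(lc_∂(T)) = (a/(b·∏ pᵢ^{kᵢ}))·lc_∂(L)` with `a, b ∈ R`, where each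
`pᵢ^{dᵢ}` with `dᵢ > kᵢ` is non-removable from `L`. -/
def Desing (L : A) (r m : ℕ) (c : R) (p : Fin m → Polynomial R)
    (e : Fin m → ℕ) (T : A) : Prop :=
  T ∈ O.cont L ∧ r ≤ O.ord T ∧
  ∃ (a b : R) (k : Fin m → ℕ) (t l : Polynomial R),
    b ≠ 0 ∧ (∀ i, k i ≤ e i) ∧
    O.lc T = algebraMap (Polynomial R) (QX R) t ∧
    O.lc L = algebraMap (Polynomial R) (QX R) l ∧
    (⇑O.σ.symm)^[O.ord T - r] t * (C b * ∏ i, p i ^ k i) = C a * l ∧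
    (∀ i (d : ℕ), k i < d → ¬ O.Removable L (p i ^ d))

/-- The left ideal of `R[x][∂]` generated by a set `S ⊆ R[x][∂]`. -/
def LIdeal (S : Set A) : Set A :=
  {P | ∃ (n : ℕ) (co s : Fin n → A), (∀ i, O.InB (co i)) ∧ (∀ i, s i ∈ S) ∧
    P = ∑ i, co i * s i}

/-- The constant `a ∈ R` viewed inside the Ore algebra. -/
def cst (a : R) : A := O.ιp (C a)

/-- The saturation `I : a^∞ = {P ∈ R[x][∂] : aⁱ·P ∈ I for some i}`. -/
def sat (I : Set A) (a : R) : Set A :=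
  {P | O.InB P ∧ ∃ i : ℕ, O.cst a ^ i * P ∈ I}

end OreAlg

/-- The set of constants `c_T` arising from desingularized operators `T` for `L`
via `σ^{r-k}(lc_∂(T)) = c_T·g`, together with `0`. -/
def OreAlg.DesingConsts {R : Type} [CommRing R] [IsDomain R] {A : Type} [Ring A]
    (O : OreAlg R A) (L : A) (r m : ℕ) (c : R) (p : Fin m → Polynomial R)
    (e : Fin m → ℕ) (g : Polynomial R) : Set R :=
  {c' | c' = 0 ∨ ∃ (T : A) (t : Polynomial R),
    O.Desing L r m c p e T ∧
    O.lc T = algebraMap (Polynomial R) (QX R) t ∧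
    (⇑O.σ.symm)^[O.ord T - r] t = C c' * g}

/-!
The constants form an ideal because two desingularized operators can be shifted by powers of
`∂` to a common order without changing their twisted leading coefficients `σ^{-(k-r)}(lc T)`,
and then added or scaled by constants: the result lies in `cont(L)` and its twisted leading
coefficient is a constant multiple of that of a desingularized operator, which is all that
desingularity depends on.

Since `R` is a PID, the ideal has a generator; it is realised by an operator as soon as some
desingularized operator exists. For that, let `κᵢ` be the largest exponent with `pᵢ^κᵢ`
removable. Over `Q_R[x]`, from `uᵢ·vᵢ·pᵢ^κᵢ = wᵢ·lc(L)` with `pᵢ ∤ wᵢ` one gets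
`lc(L)/pᵢ^κᵢ ∈ (lc(L), uᵢ)`, and since the `pᵢ^κᵢ` are pairwise coprime the cofactors combine
to `lc(L)/∏ pᵢ^κᵢ = c·∏ pᵢ^(eᵢ-κᵢ)`. Clearing denominators gives an `R[x]`-combination of
`lc(L)` and the twisted leading coefficients `uᵢ` of the `pᵢ^κᵢ`-removing operators equal to a
constant times `∏ pᵢ^(eᵢ-κᵢ)`, and the same combination of shifts of `L` and of those operators
is desingularized.
-/

lemma Copr.not_dvd {R : Type} [CommRing R] {q w : R[X]} {d : ℕ} (hq : Irreducible q)
    (hd : d ≠ 0) (h : Copr (q ^ d) w) : ¬q ∣ w :=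
  fun hdvd => hq.not_isUnit (h q (dvd_pow_self q hd) hdvd)

lemma le_of_pow_dvd_mul_pow {S : Type} [CommRing S] [IsDomain S] {q x : S} {d n : ℕ}
    (hq : q ≠ 0) (hqu : ¬IsUnit q) (hx : IsCoprime q x) (h : q ^ d ∣ x * q ^ n) : d ≤ n :=
  (pow_dvd_pow_iff hq hqu).mp (hx.pow_left.dvd_of_dvd_mul_left h)

lemma mem_span_insert_range_of_isCoprime {S : Type} [CommRing S] [IsDomain S] {ι : Type}
    [Fintype ι] [DecidableEq ι] {l G : S} {P u v w : ι → S} (hl : l = G * ∏ i, P i)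
    (hP : ∀ i, P i ≠ 0) (hPw : ∀ i, IsCoprime (P i) (w i))
    (hPP : Pairwise fun i j => IsCoprime (P i) (P j)) (huvw : ∀ i, u i * (v i * P i) = w i * l) :
    G ∈ Ideal.span (insert l (Set.range u)) := by
  have hl_mem : l ∈ Ideal.span (insert l (Set.range u)) := Ideal.subset_span (Set.mem_insert _ _)
  cases isEmpty_or_nonempty ι
  · rw [Finset.univ_eq_empty, Finset.prod_empty, mul_one] at hl
    rwa [← hl]
  -- `l / P i` lies in the span: cancel `P i` in `huvw`, then use `1 = a * P i + b * w i`.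
  have hcof : ∀ i, G * ∏ j ∈ {i}ᶜ, P j ∈ Ideal.span (insert l (Set.range u)) := by
    intro i
    have hli : (G * ∏ j ∈ {i}ᶜ, P j) * P i = l := by
      rw [hl, Fintype.prod_eq_mul_prod_compl i]; ring
    have huv : u i * v i = w i * (G * ∏ j ∈ {i}ᶜ, P j) :=
      mul_right_cancel₀ (hP i) (by rw [mul_assoc, huvw, mul_assoc, hli])
    obtain ⟨a, b, hab⟩ := hPw i
    have hcomb : G * ∏ j ∈ {i}ᶜ, P j = a * l + (b * v i) * u i := by
      rw [← hli]; linear_combination (G * ∏ j ∈ {i}ᶜ, P j) * hab.symm - b * huv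
    rw [hcomb]
    exact Ideal.add_mem _ (Ideal.mul_mem_left _ _ hl_mem)
      (Ideal.mul_mem_left _ _ (Ideal.subset_span (Set.mem_insert_of_mem _ ⟨i, rfl⟩)))
  obtain ⟨μ, hμ⟩ := exists_sum_eq_one_iff_pairwise_coprime'.mpr hPP
  rw [← mul_one G, ← hμ, Finset.mul_sum]
  exact Ideal.sum_mem _ fun i _ => by
    rw [mul_left_comm]; exact Ideal.mul_mem_left _ _ (hcof i)

lemma exists_C_mul_mem_span_of_map_mem_span {R : Type} [CommRing R] [IsDomain R]
    {s : Set R[X]} {f : R[X]}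
    (hf : f.map (algebraMap R (FractionRing R)) ∈
      Ideal.span (Polynomial.map (algebraMap R (FractionRing R)) '' s)) :
    ∃ d : R, d ≠ 0 ∧ C d * f ∈ Ideal.span s := by
  let _ := Polynomial.algebra R (FractionRing R)
  have := Polynomial.isLocalization (nonZeroDivisors R) (FractionRing R)
  have hmap : ⇑(algebraMap R[X] (FractionRing R)[X]) =
      Polynomial.map (algebraMap R (FractionRing R)) := rfl
  rw [← hmap, ← Ideal.map_span] at hf
  obtain ⟨⟨⟨y, hy⟩, ⟨_, d, hd, rfl⟩⟩, hyd⟩ :=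
    (IsLocalization.mem_map_algebraMap_iff (Submonoid.map C (nonZeroDivisors R)) _).mp hf
  refine ⟨d, nonZeroDivisors.ne_zero hd, ?_⟩
  rw [hmap, ← Polynomial.map_mul, mul_comm] at hyd
  rwa [Polynomial.map_injective _ (IsFractionRing.injective R (FractionRing R)) hyd]

lemma irreducible_map_fractionRing {R : Type} [CommRing R] [IsDomain R] [IsGCDMonoid R]
    {q : R[X]} (hq : Irreducible q) (hdeg : q.natDegree ≠ 0) :
    Irreducible (q.map (algebraMap R (FractionRing R))) :=
  (hq.isPrimitive hdeg).irreducible_iff_irreducible_map_fraction_map.mp hq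

lemma isCoprime_map_of_not_dvd {R : Type} [CommRing R] [IsDomain R] [IsGCDMonoid R]
    {q f : R[X]} (hq : Irreducible q) (hdeg : q.natDegree ≠ 0) (h : ¬q ∣ f) :
    IsCoprime (q.map (algebraMap R (FractionRing R))) (f.map (algebraMap R (FractionRing R))) :=
  (irreducible_map_fractionRing hq hdeg).coprime_iff_not_dvd.mpr fun hdvd =>
    h (((hq.isPrimitive hdeg).dvd_iff_fraction_map_dvd_fraction_map _).mpr hdvd)

lemma prod_pow_sub_mul_prod_pow {M ι : Type} [CommMonoid M] [Fintype ι] (q : ι → M)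
    {e κ : ι → ℕ} (hκ : ∀ i, κ i ≤ e i) :
    (∏ i, q i ^ (e i - κ i)) * ∏ i, q i ^ κ i = ∏ i, q i ^ e i := by
  rw [← Finset.prod_mul_distrib]
  exact Finset.prod_congr rfl fun i _ => by rw [← pow_add, Nat.sub_add_cancel (hκ i)]

section RemovalCombination

variable {R : Type} [CommRing R] [IsDomain R]

local notation "φ" => Polynomial.map (algebraMap R (FractionRing R))

lemma exists_C_mul_mem_span_of_removal [IsGCDMonoid R] {m : ℕ} {c : R} {p : Fin m → R[X]}
    {e κ : Fin m → ℕ} (hirr : ∀ i, Irreducible (p i) ∧ 0 < (p i).natDegree)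
    (hcop : ∀ i j, i ≠ j → ¬p i ∣ p j) (hκ : ∀ i, κ i ≤ e i) {u v w : Fin m → R[X]}
    (hw : ∀ i, ¬p i ∣ w i)
    (huvw : ∀ i, u i * (v i * p i ^ κ i) = w i * (C c * ∏ j, p j ^ e j)) :
    ∃ d : R, d ≠ 0 ∧ C d * (C c * ∏ i, p i ^ (e i - κ i)) ∈
      Ideal.span (insert (C c * ∏ j, p j ^ e j) (Set.range u)) := by
  classical
  have hcoprime : ∀ i {f : R[X]}, ¬p i ∣ f → IsCoprime (φ (p i)) (φ f) := fun i _ h =>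
    isCoprime_map_of_not_dvd (hirr i).1 (hirr i).2.ne' h
  apply exists_C_mul_mem_span_of_map_mem_span
  rw [Set.image_insert_eq, ← Set.range_comp]
  refine mem_span_insert_range_of_isCoprime (P := fun i => φ (p i) ^ κ i)
    (v := fun i => φ (v i)) (w := fun i => φ (w i)) ?_ (fun i => ?_) (fun i => ?_)
    (fun i j hij => ?_) (fun i => ?_)
  · simp only [mul_assoc, ← prod_pow_sub_mul_prod_pow p hκ, Polynomial.map_mul,
      Polynomial.map_prod, Polynomial.map_pow]
  · exact pow_ne_zero _
      ((Polynomial.map_ne_zero_iff (IsFractionRing.injective R _)).mpr (hirr i).1.ne_zero)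
  · exact (hcoprime i (hw i)).pow_left
  · exact (hcoprime i (hcop i j hij)).pow_left.pow_right
  · simpa only [Function.comp_apply, Polynomial.map_mul, Polynomial.map_pow]
      using congrArg φ (huvw i)

end RemovalCombination

namespace OreAlg

variable {R : Type} [CommRing R] [IsDomain R] {A : Type} [Ring A] (O : OreAlg R A)

local notation "Φ" => algebraMap (Polynomial R) (QX R)

lemma algebraMap_polynomial_injective : Function.Injective (Φ : R[X] → QX R) :=
  IsFractionRing.injective _ _

def coeffHom (i : ℕ) : A →+ QX R :=
  AddMonoidHom.mk' (O.coeff · i) (fun P Q => O.coeff_add P Q i)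

lemma coeff_zero (i : ℕ) : O.coeff 0 i = 0 :=
  map_zero (O.coeffHom i)

lemma coeff_sum {ι : Type} (s : Finset ι) (F : ι → A) (j : ℕ) :
    O.coeff (∑ i ∈ s, F i) j = ∑ i ∈ s, O.coeff (F i) j :=
  map_sum (O.coeffHom j) F s

lemma bddAbove_coeff_ne_zero (P : A) : BddAbove {i | O.coeff P i ≠ 0} := by
  obtain ⟨N, hN⟩ := O.coeff_bdd P
  exact ⟨N, fun i hi => not_lt.mp fun h => hi (hN i h)⟩

lemma coeff_eq_zero_of_ord_lt {P : A} {j : ℕ} (h : O.ord P < j) : O.coeff P j = 0 :=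
  not_not.mp fun hj => (le_csSup (O.bddAbove_coeff_ne_zero P) hj).not_gt h

lemma lc_ne_zero {P : A} (hP : P ≠ 0) : O.lc P ≠ 0 := by
  refine Nat.sSup_mem ?_ (O.bddAbove_coeff_ne_zero P)
  by_contra h
  exact hP (O.coeff_inj P 0 fun i => by
    rw [O.coeff_zero]; by_contra hi; exact h ⟨i, hi⟩)

lemma ord_eq_of_coeff {P : A} {n : ℕ} (hn : O.coeff P n ≠ 0)
    (h : ∀ j, n < j → O.coeff P j = 0) : O.ord P = n :=
  le_antisymm (csSup_le ⟨n, hn⟩ fun _ hi => not_lt.mp fun hlt => hi (h _ hlt))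
    (le_csSup (O.bddAbove_coeff_ne_zero P) hn)

lemma ord_zero : O.ord (0 : A) = 0 := by
  simp [ord, O.coeff_zero]

lemma eq_sum_coeff_mul_D_pow (P : A) {N : ℕ} (h : ∀ j, N < j → O.coeff P j = 0) :
    P = ∑ i ∈ Finset.range (N + 1), O.ι (O.coeff P i) * O.D ^ i :=
  O.coeff_inj _ _ fun j => (O.coeff_mk N _ h j).symm

lemma coeff_mul_D (P : A) (j : ℕ) :
    O.coeff (P * O.D) j = if j = 0 then 0 else O.coeff P (j - 1) := by
  obtain ⟨N, hN⟩ := O.coeff_bdd P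
  set c : ℕ → QX R := fun i => if i = 0 then 0 else O.coeff P (i - 1)
  have hc : ∀ i, N + 1 < i → c i = 0 := fun i hi => by
    simp only [c, if_neg (show i ≠ 0 by omega)]
    exact hN _ (by omega)
  have hPD : P * O.D = ∑ i ∈ Finset.range (N + 1 + 1), O.ι (c i) * O.D ^ i := by
    rw [Finset.sum_range_succ', O.eq_sum_coeff_mul_D_pow P hN, Finset.sum_mul]
    simp [c, pow_succ, mul_assoc]
  rw [hPD, O.coeff_mk _ _ hc]

lemma coeff_mul_D_zero (P : A) : O.coeff (P * O.D) 0 = 0 := by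
  simp [coeff_mul_D]

lemma coeff_mul_D_succ (P : A) (j : ℕ) : O.coeff (P * O.D) (j + 1) = O.coeff P j := by
  simp [coeff_mul_D]

lemma δ_zero : O.δ 0 = 0 := by
  simpa using O.δ_linear 0 0

lemma D_mul_ιp (f : R[X]) : O.D * O.ιp f = O.ιp (O.σ f) * O.D + O.ιp (O.δ f) :=
  O.comm_rule f

/-- `t` may be `0`, so `n` is only an upper bound for the order of `P`. -/
def HasTopCoeff (P : A) (n : ℕ) (t : R[X]) : Prop :=
  O.InB P ∧ (∀ j, n < j → O.coeff P j = 0) ∧ O.coeff P n = Φ t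

variable {O}

lemma hasTopCoeff_ord {P : A} (hP : O.InB P) {t : R[X]} (ht : O.lc P = Φ t) :
    O.HasTopCoeff P (O.ord P) t :=
  ⟨hP, fun _ => O.coeff_eq_zero_of_ord_lt, ht⟩

namespace HasTopCoeff

variable {P Q : A} {n : ℕ} {t s : R[X]}

lemma ord_eq (h : O.HasTopCoeff P n t) (ht : t ≠ 0) : O.ord P = n :=
  O.ord_eq_of_coeff
    (by rw [h.2.2]; exact (map_ne_zero_iff _ algebraMap_polynomial_injective).mpr ht) h.2.1

lemma lc_eq (h : O.HasTopCoeff P n t) (ht : t ≠ 0) : O.lc P = Φ t := by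
  rw [lc, h.ord_eq ht, h.2.2]

lemma add (hP : O.HasTopCoeff P n t) (hQ : O.HasTopCoeff Q n s) :
    O.HasTopCoeff (P + Q) n (t + s) := by
  refine ⟨fun j => ?_, fun j hj => ?_, ?_⟩
  · obtain ⟨a, ha⟩ := hP.1 j
    obtain ⟨b, hb⟩ := hQ.1 j
    exact ⟨a + b, by rw [O.coeff_add, ha, hb, map_add]⟩
  · rw [O.coeff_add, hP.2.1 j hj, hQ.2.1 j hj, add_zero]
  · rw [O.coeff_add, hP.2.2, hQ.2.2, map_add]

lemma sum {ι : Type} {F : ι → A} {τ : ι → R[X]} (S : Finset ι)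
    (h : ∀ i ∈ S, O.HasTopCoeff (F i) n (τ i)) :
    O.HasTopCoeff (∑ i ∈ S, F i) n (∑ i ∈ S, τ i) := by
  classical
  induction S using Finset.induction_on with
  | empty =>
    simp only [Finset.sum_empty]
    exact ⟨fun _ => ⟨0, by rw [O.coeff_zero, map_zero]⟩, fun _ _ => O.coeff_zero _,
      by rw [O.coeff_zero, map_zero]⟩
  | insert a S ha ih =>
    rw [Finset.sum_insert ha, Finset.sum_insert ha]
    exact (h a (Finset.mem_insert_self a S)).add
      (ih fun i hi => h i (Finset.mem_insert_of_mem hi))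

lemma ιp_mul (h : O.HasTopCoeff P n t) (f : R[X]) :
    O.HasTopCoeff (O.ιp f * P) n (f * t) := by
  refine ⟨fun j => ?_, fun j hj => ?_, ?_⟩
  · obtain ⟨a, ha⟩ := h.1 j
    exact ⟨f * a, by rw [ιp, O.coeff_smul, ha, map_mul]⟩
  · rw [ιp, O.coeff_smul, h.2.1 j hj, mul_zero]
  · rw [ιp, O.coeff_smul, h.2.2, map_mul]

lemma D_mul (h : O.HasTopCoeff P n t) : O.HasTopCoeff (O.D * P) (n + 1) (O.σ t) := by
  obtain ⟨hB, hbd, htop⟩ := h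
  choose f hf using hB
  have hf0 : ∀ j, n < j → f j = 0 := fun j hj =>
    algebraMap_polynomial_injective (by rw [← hf, hbd j hj, map_zero])
  set Pσ := ∑ i ∈ Finset.range (n + 1), O.ιp (O.σ (f i)) * O.D ^ i
  set Pδ := ∑ i ∈ Finset.range (n + 1), O.ιp (O.δ (f i)) * O.D ^ i
  have hσ : ∀ j, O.coeff Pσ j = Φ (O.σ (f j)) :=
    O.coeff_mk n _ fun j hj => by rw [hf0 j hj, map_zero, map_zero]
  have hδ : ∀ j, O.coeff Pδ j = Φ (O.δ (f j)) :=
    O.coeff_mk n _ fun j hj => by rw [hf0 j hj, O.δ_zero, map_zero]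
  have hsplit : O.D * P = Pσ * O.D + Pδ := by
    conv_lhs => rw [O.eq_sum_coeff_mul_D_pow P hbd]
    simp only [Pσ, Pδ, hf, Finset.mul_sum, Finset.sum_mul, ← Finset.sum_add_distrib]
    refine Finset.sum_congr rfl fun i _ => ?_
    rw [← ιp, ← mul_assoc, D_mul_ιp, add_mul, mul_assoc, mul_assoc, ← pow_succ',
      ← pow_succ]
  have hzero : O.coeff (O.D * P) 0 = Φ (O.δ (f 0)) := by
    rw [hsplit, O.coeff_add, coeff_mul_D_zero, hδ, zero_add]
  have hsucc : ∀ j, O.coeff (O.D * P) (j + 1) = Φ (O.σ (f j) + O.δ (f (j + 1))) := by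
    intro j
    rw [hsplit, O.coeff_add, coeff_mul_D_succ, hσ, hδ, map_add]
  refine ⟨fun j => ?_, fun j hj => ?_, ?_⟩
  · cases j with
    | zero => exact ⟨_, hzero⟩
    | succ j => exact ⟨_, hsucc j⟩
  · obtain ⟨j, rfl⟩ : ∃ i, j = i + 1 := ⟨j - 1, by omega⟩
    rw [hsucc, hf0 j (by omega), hf0 (j + 1) (by omega), map_zero, O.δ_zero, add_zero,
      map_zero]
  · rw [hsucc, hf0 (n + 1) (by omega), O.δ_zero, add_zero,
      algebraMap_polynomial_injective (htop.symm.trans (hf n))]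

lemma D_pow_mul (h : O.HasTopCoeff P n t) (k : ℕ) :
    O.HasTopCoeff (O.D ^ k * P) (n + k) ((⇑O.σ)^[k] t) := by
  induction k with
  | zero => simpa using h
  | succ k ih =>
    rw [pow_succ', mul_assoc, Function.iterate_succ_apply', ← add_assoc]
    exact ih.D_mul

end HasTopCoeff

variable (O)

lemma coeff_mul_of_hasTopCoeff (P : A) {T : A} {n : ℕ} {t : R[X]} (hT : O.HasTopCoeff T n t) :
    (∀ j, O.ord P + n < j → O.coeff (P * T) j = 0) ∧
      O.coeff (P * T) (O.ord P + n) = O.lc P * Φ ((⇑O.σ)^[O.ord P] t) := by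
  have hco : ∀ j, O.coeff (P * T) j =
      ∑ i ∈ Finset.range (O.ord P + 1), O.coeff P i * O.coeff (O.D ^ i * T) j := by
    intro j
    conv_lhs => rw [O.eq_sum_coeff_mul_D_pow P fun _ => O.coeff_eq_zero_of_ord_lt]
    rw [Finset.sum_mul, O.coeff_sum]
    exact Finset.sum_congr rfl fun i _ => by rw [mul_assoc, O.coeff_smul]
  have hD := hT.D_pow_mul
  refine ⟨fun j hj => ?_, ?_⟩
  · rw [hco]
    refine Finset.sum_eq_zero fun i hi => ?_
    rw [(hD i).2.1 j (by have := Finset.mem_range.mp hi; omega), mul_zero]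
  · rw [hco, Finset.sum_eq_single_of_mem _ (Finset.self_mem_range_succ _), add_comm,
      (hD _).2.2, lc]
    intro i hi hne
    rw [(hD i).2.1 _ (by have := Finset.mem_range.mp hi; omega), mul_zero]

lemma ord_mul_of_hasTopCoeff {P T : A} (hP : P ≠ 0) {n : ℕ} {t : R[X]}
    (hT : O.HasTopCoeff T n t) (ht : t ≠ 0) : O.ord (P * T) = O.ord P + n := by
  obtain ⟨hbd, htop⟩ := O.coeff_mul_of_hasTopCoeff P hT
  refine O.ord_eq_of_coeff ?_ hbd
  rw [htop, ← RingAut.coe_pow]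
  exact mul_ne_zero (O.lc_ne_zero hP) ((map_ne_zero_iff _ algebraMap_polynomial_injective).mpr
    (EmbeddingLike.map_ne_zero_iff.mpr ht))

lemma iterate_σ_symm_C_mul (n : ℕ) (s : R) (x : R[X]) :
    (⇑O.σ.symm)^[n] (C s * x) = C s * (⇑O.σ.symm)^[n] x := by
  have hC : O.σ.symm (C s) = C s := by rw [O.σ.symm_apply_eq, O.σ_fix]
  rw [iterate_map_mul, Function.iterate_fixed hC]

lemma iterate_σ_symm_iterate_σ {a N : ℕ} (r : ℕ) (hr : r ≤ a) (haN : a ≤ N) (t : R[X]) :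
    (⇑O.σ.symm)^[N - r] ((⇑O.σ)^[N - a] t) = (⇑O.σ.symm)^[a - r] t := by
  rw [show N - r = (a - r) + (N - a) by omega, Function.iterate_add_apply,
    (Function.LeftInverse.iterate O.σ.symm_apply_apply _) t]

lemma iterate_σ_iterate_σ_symm {a N : ℕ} (r : ℕ) (hr : r ≤ a) (haN : a ≤ N) (t : R[X]) :
    (⇑O.σ)^[N - r] ((⇑O.σ.symm)^[a - r] t) = (⇑O.σ)^[N - a] t := by
  rw [show N - r = (N - a) + (a - r) by omega, Function.iterate_add_apply,
    (Function.LeftInverse.iterate O.σ.apply_symm_apply _) t]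

section Desing

variable {O} {L : A} {r m : ℕ} {c : R} {p : Fin m → R[X]} {e : Fin m → ℕ}

lemma Desing.ne_zero {T : A} (hr : 0 < r) (hT : O.Desing L r m c p e T) : T ≠ 0 := by
  rintro rfl
  have := hT.2.1
  rw [O.ord_zero] at this
  omega

lemma Desing.lc_poly_ne_zero {T : A} (hr : 0 < r) (hT : O.Desing L r m c p e T) {t : R[X]}
    (ht : O.lc T = Φ t) : t ≠ 0 := by
  rintro rfl
  exact O.lc_ne_zero (hT.ne_zero hr) (by rw [ht, map_zero])

/-- Desingularity only depends on the twisted leading coefficient up to nonzero constants. -/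
lemma Desing.of_twist_eq {T' T : A} (hT' : O.Desing L r m c p e T') {t' : R[X]}
    (ht' : O.lc T' = Φ t') (hT : T ∈ O.cont L) (hr : r ≤ O.ord T) {t : R[X]}
    (ht : O.lc T = Φ t) {a b : R} (hb : b ≠ 0)
    (h : (⇑O.σ.symm)^[O.ord T - r] t * C b = C a * (⇑O.σ.symm)^[O.ord T' - r] t') :
    O.Desing L r m c p e T := by
  obtain ⟨-, -, a₁, b₁, k, t₁, l, hb₁, hk, ht₁, hl, heq, hnr⟩ := hT'
  obtain rfl : t₁ = t' := algebraMap_polynomial_injective (ht₁.symm.trans ht')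
  refine ⟨hT, hr, a * a₁, b * b₁, k, t, l, mul_ne_zero hb hb₁, hk, ht, hl, ?_, hnr⟩
  calc (⇑O.σ.symm)^[O.ord T - r] t * (C (b * b₁) * ∏ i, p i ^ k i)
      = ((⇑O.σ.symm)^[O.ord T - r] t * C b) * (C b₁ * ∏ i, p i ^ k i) := by
        rw [C_mul]; ring
    _ = C a * ((⇑O.σ.symm)^[O.ord T' - r] t₁ * (C b₁ * ∏ i, p i ^ k i)) := by
        rw [h]; ring
    _ = C (a * a₁) * l := by rw [heq, C_mul]; ring

variable {g : R[X]}

lemma desingConsts_mul_left (hr : 0 < r) (s : R) {a : R}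
    (ha : a ∈ O.DesingConsts L r m c p e g) : s * a ∈ O.DesingConsts L r m c p e g := by
  rcases ha with rfl | ⟨T, t, hT, ht, htw⟩
  · exact Or.inl (mul_zero s)
  by_cases hs : s = 0
  · exact Or.inl (by rw [hs, zero_mul])
  have hst : C s * t ≠ 0 := mul_ne_zero (C_ne_zero.mpr hs) (hT.lc_poly_ne_zero hr ht)
  have hS := (hasTopCoeff_ord hT.1.1 ht).ιp_mul (C s)
  have hord := hS.ord_eq hst
  obtain ⟨Q, hQ⟩ := hT.1.2
  have hS_cont : O.ιp (C s) * T ∈ O.cont L := ⟨hS.1, O.ιp (C s) * Q, by rw [hQ, mul_assoc]⟩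
  refine Or.inr ⟨_, _, hT.of_twist_eq ht hS_cont (hord ▸ hT.2.1) (hS.lc_eq hst)
    (a := s) one_ne_zero ?_, hS.lc_eq hst, ?_⟩
  · rw [hord, O.iterate_σ_symm_C_mul, C_1, mul_one]
  · rw [hord, O.iterate_σ_symm_C_mul, htw, C_mul, mul_assoc]

lemma desingConsts_add (hg : g ≠ 0) {a b : R}
    (ha : a ∈ O.DesingConsts L r m c p e g) (hb : b ∈ O.DesingConsts L r m c p e g) :
    a + b ∈ O.DesingConsts L r m c p e g := by
  rcases ha with rfl | ⟨Ta, ta, hTa, hta, htwa⟩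
  · rwa [zero_add]
  rcases hb with rfl | ⟨Tb, tb, hTb, htb, htwb⟩
  · exact (add_zero a).symm ▸ Or.inr ⟨Ta, ta, hTa, hta, htwa⟩
  by_cases hab : a + b = 0
  · exact Or.inl hab
  by_cases ha0 : a = 0
  · subst ha0
    exact (zero_add b).symm ▸ Or.inr ⟨Tb, tb, hTb, htb, htwb⟩
  set K := max (O.ord Ta) (O.ord Tb)
  have hA := (hasTopCoeff_ord hTa.1.1 hta).D_pow_mul (K - O.ord Ta)
  have hB := (hasTopCoeff_ord hTb.1.1 htb).D_pow_mul (K - O.ord Tb)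
  rw [Nat.add_sub_of_le (le_max_left _ _)] at hA
  rw [Nat.add_sub_of_le (le_max_right _ _)] at hB
  set u := (⇑O.σ)^[K - O.ord Ta] ta + (⇑O.σ)^[K - O.ord Tb] tb
  have htw : (⇑O.σ.symm)^[K - r] u = C (a + b) * g := by
    rw [iterate_map_add, O.iterate_σ_symm_iterate_σ r hTa.2.1 (le_max_left _ _),
      O.iterate_σ_symm_iterate_σ r hTb.2.1 (le_max_right _ _), htwa, htwb, C_add, add_mul]
  have hu : u ≠ 0 := by
    rintro hu
    rw [hu, iterate_map_zero] at htw
    exact mul_ne_zero (C_ne_zero.mpr hab) hg htw.symm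
  have hS := hA.add hB
  have hord := hS.ord_eq hu
  obtain ⟨Qa, hQa⟩ := hTa.1.2
  obtain ⟨Qb, hQb⟩ := hTb.1.2
  have hS_cont : O.D ^ (K - O.ord Ta) * Ta + O.D ^ (K - O.ord Tb) * Tb ∈ O.cont L :=
    ⟨hS.1, O.D ^ (K - O.ord Ta) * Qa + O.D ^ (K - O.ord Tb) * Qb,
      by rw [hQa, hQb, add_mul, mul_assoc, mul_assoc]⟩
  refine Or.inr ⟨_, u, hTa.of_twist_eq hta hS_cont (hord ▸ le_trans hTa.2.1 (le_max_left _ _))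
    (hS.lc_eq hu) (a := a + b) ha0 ?_, hS.lc_eq hu, hord ▸ htw⟩
  rw [hord, htw, htwa]
  ring

end Desing

section Existence

variable {O} {L : A} {r m : ℕ} {c : R} {p : Fin m → R[X]} {e : Fin m → ℕ}

local notation "φ" => Polynomial.map (algebraMap R (FractionRing R))

lemma exists_cont_hasTopCoeff_combination {ι : Type} [Fintype ι] {l : R[X]}
    (hL : O.HasTopCoeff L r l) {T : ι → A} {n : ι → ℕ} {t : ι → R[X]}
    (hT : ∀ i, T i ∈ O.cont L) (hn : ∀ i, r ≤ n i)
    (hTt : ∀ i, O.HasTopCoeff (T i) (n i) (t i)) (cl : R[X]) (ci : ι → R[X]) :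
    ∃ (S : A) (N : ℕ), S ∈ O.cont L ∧ r ≤ N ∧ O.HasTopCoeff S N
      ((⇑O.σ)^[N - r] (cl * l + ∑ i, ci i * (⇑O.σ.symm)^[n i - r] (t i))) := by
  classical
  set N := max r (Finset.univ.sup n)
  have hrN : r ≤ N := le_max_left _ _
  have hnN : ∀ i, n i ≤ N := fun i => le_max_of_le_right (Finset.le_sup (Finset.mem_univ i))
  have hLN := hL.D_pow_mul (N - r)
  rw [Nat.add_sub_of_le hrN] at hLN
  have hTN : ∀ i, O.HasTopCoeff (O.D ^ (N - n i) * T i) N ((⇑O.σ)^[N - n i] (t i)) := by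
    intro i
    have := (hTt i).D_pow_mul (N - n i)
    rwa [Nat.add_sub_of_le (hnN i)] at this
  have htop : (⇑O.σ)^[N - r] (cl * l + ∑ i, ci i * (⇑O.σ.symm)^[n i - r] (t i)) =
      (⇑O.σ)^[N - r] cl * (⇑O.σ)^[N - r] l +
        ∑ i, (⇑O.σ)^[N - r] (ci i) * (⇑O.σ)^[N - n i] (t i) := by
    simp only [← RingAut.coe_pow, map_add, map_mul, map_sum]
    simp only [RingAut.coe_pow, O.iterate_σ_iterate_σ_symm r (hn _) (hnN _)]
  have hS := (hLN.ιp_mul ((⇑O.σ)^[N - r] cl)).add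
    (HasTopCoeff.sum Finset.univ fun i _ => (hTN i).ιp_mul ((⇑O.σ)^[N - r] (ci i)))
  rw [← htop] at hS
  choose Q hQ using fun i => (hT i).2
  refine ⟨_, N, ⟨hS.1, O.ιp ((⇑O.σ)^[N - r] cl) * O.D ^ (N - r) +
    ∑ i, O.ιp ((⇑O.σ)^[N - r] (ci i)) * O.D ^ (N - n i) * Q i, ?_⟩, hrN, hS⟩
  simp only [add_mul, Finset.sum_mul, hQ, mul_assoc]

namespace Factored

lemma C_mul_prod_pow_ne_zero (hF : O.Factored L r m c p e) (k : Fin m → ℕ) :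
    C c * ∏ i, p i ^ k i ≠ 0 :=
  mul_ne_zero (C_ne_zero.mpr hF.2.2.1)
    (Finset.prod_ne_zero_iff.mpr fun i _ => pow_ne_zero _ (hF.2.2.2.2.1 i).1.ne_zero)

lemma hasTopCoeff (hF : O.Factored L r m c p e) (hLB : O.InB L) :
    O.HasTopCoeff L r (C c * ∏ i, p i ^ e i) :=
  hF.1 ▸ hasTopCoeff_ord hLB hF.2.2.2.1

lemma not_dvd (hF : O.Factored L r m c p e) {i j : Fin m} (hij : i ≠ j) : ¬p i ∣ p j :=
  fun h => (hF.2.2.2.2.1 i).1.not_isUnit (hF.2.2.2.2.2 i j hij (p i) dvd_rfl h)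

lemma isCoprime_map_cofactor [IsGCDMonoid R] (hF : O.Factored L r m c p e) (i : Fin m)
    {w : R[X]} (hw : ¬p i ∣ w) :
    IsCoprime (φ (p i)) (φ (w * (C c * ∏ j ∈ {i}ᶜ, p j ^ e j))) := by
  have hcoprime : ∀ {f : R[X]}, ¬p i ∣ f → IsCoprime (φ (p i)) (φ f) := fun h =>
    isCoprime_map_of_not_dvd (hF.2.2.2.2.1 i).1 (hF.2.2.2.2.1 i).2.ne' h
  have hcu : IsUnit (φ (C c)) := by
    rw [Polynomial.map_C]
    exact isUnit_C.mpr (IsUnit.mk0 _ ((map_ne_zero_iff _ (IsFractionRing.injective R _)).mpr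
      hF.2.2.1))
  rw [Polynomial.map_mul, Polynomial.map_mul]
  refine (hcoprime hw).mul_right ?_
  rw [isCoprime_mul_unit_left_right hcu, Polynomial.map_prod]
  refine IsCoprime.prod_right fun j hj => ?_
  rw [Polynomial.map_pow]
  exact (hcoprime (hF.not_dvd (by simpa [eq_comm] using hj))).pow_right

lemma le_of_removable [IsGCDMonoid R] (hF : O.Factored L r m c p e) {i : Fin m} {d : ℕ}
    (h : O.Removable L (p i ^ d)) : d ≤ e i := by
  classical
  rcases Nat.eq_zero_or_pos d with rfl | hd
  · exact Nat.zero_le _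
  obtain ⟨k, P, -, -, w, v, t, l, -, hw, -, hl, heq⟩ := h
  obtain rfl : l = C c * ∏ j, p j ^ e j :=
    algebraMap_polynomial_injective (hl.symm.trans hF.2.2.2.1)
  have hirr := (hF.2.2.2.2.1 i).1
  have hirrK := irreducible_map_fractionRing hirr (hF.2.2.2.2.1 i).2.ne'
  have hsplit :
      w * (C c * ∏ j, p j ^ e j) = w * (C c * ∏ j ∈ {i}ᶜ, p j ^ e j) * p i ^ e i := by
    rw [Fintype.prod_eq_mul_prod_compl i]; ring
  refine le_of_pow_dvd_mul_pow hirrK.ne_zero hirrK.not_isUnit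
    (hF.isCoprime_map_cofactor i (hw.not_dvd hirr hd.ne')) ?_
  have hdvd : p i ^ d ∣ w * (C c * ∏ j ∈ {i}ᶜ, p j ^ e j) * p i ^ e i := by
    rw [← hsplit, ← heq]
    exact Dvd.intro_left ((⇑O.σ.symm)^[k] t * v) (by ring)
  simpa only [Polynomial.map_mul, Polynomial.map_pow] using
    Polynomial.map_dvd (algebraMap R (FractionRing R)) hdvd

lemma exists_removing_hasTopCoeff (hF : O.Factored L r m c p e) (hLB : O.InB L) (i : Fin m) {κ : ℕ}
    (hκ : κ ≠ 0 → O.Removable L (p i ^ κ)) :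
    ∃ (T : A) (n : ℕ) (t v w : R[X]), T ∈ O.cont L ∧ r ≤ n ∧ O.HasTopCoeff T n t ∧
      ¬p i ∣ w ∧ (⇑O.σ.symm)^[n - r] t * (v * p i ^ κ) = w * (C c * ∏ j, p j ^ e j) := by
  have hirr := (hF.2.2.2.2.1 i).1
  rcases eq_or_ne κ 0 with rfl | hκ0
  · exact ⟨L, r, _, 1, 1, ⟨hLB, 1, (one_mul L).symm⟩, le_rfl, hF.hasTopCoeff hLB,
      fun h => hirr.not_isUnit (isUnit_of_dvd_one h), by simp⟩
  obtain ⟨k, P, hordP, hPL, w, v, t, l, -, hw, ht, hl, heq⟩ := hκ hκ0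
  obtain rfl : l = C c * ∏ j, p j ^ e j :=
    algebraMap_polynomial_injective (hl.symm.trans hF.2.2.2.1)
  have hw' := hw.not_dvd hirr hκ0
  have hP : P ≠ 0 := by
    rintro rfl
    have ht0 : t = 0 := algebraMap_polynomial_injective (by
      rw [← ht, zero_mul, lc, O.coeff_zero, map_zero])
    rw [ht0, iterate_map_zero, zero_mul, eq_comm, mul_eq_zero] at heq
    exact heq.elim (fun hw0 => hw' (hw0 ▸ dvd_zero _)) (hF.C_mul_prod_pow_ne_zero e)
  have hord : O.ord (P * L) = k + r := by
    rw [O.ord_mul_of_hasTopCoeff hP (hF.hasTopCoeff hLB) (hF.C_mul_prod_pow_ne_zero e), hordP]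
  refine ⟨P * L, k + r, t, v, w, ⟨hPL, P, rfl⟩, by omega, hord ▸ hasTopCoeff_ord hPL ht, hw',
    ?_⟩
  rwa [Nat.add_sub_cancel]

theorem exists_desing [IsGCDMonoid R] (hF : O.Factored L r m c p e) (hLB : O.InB L) :
    ∃ (T : A) (t : R[X]), O.Desing L r m c p e T ∧ O.lc T = Φ t ∧
      (⇑O.σ.symm)^[O.ord T - r] t ≠ 0 := by
  classical
  set κ : Fin m → ℕ := fun i => Nat.findGreatest (fun d => O.Removable L (p i ^ d)) (e i)
  have hκe : ∀ i, κ i ≤ e i := fun i => Nat.findGreatest_le _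
  have hκmax : ∀ i d, κ i < d → ¬O.Removable L (p i ^ d) := fun i _ hd hrem =>
    Nat.findGreatest_is_greatest hd (hF.le_of_removable hrem) hrem
  choose T n t v w hT hn hTt hw huvw using fun i =>
    hF.exists_removing_hasTopCoeff hLB i (κ := κ i) (Nat.findGreatest_of_ne_zero rfl)
  obtain ⟨d, hd, hmem⟩ := exists_C_mul_mem_span_of_removal
    (u := fun i => (⇑O.σ.symm)^[n i - r] (t i)) hF.2.2.2.2.1 (fun _ _ => hF.not_dvd) hκe hw huvw
  obtain ⟨cl, z, hz, hcomb⟩ := Ideal.mem_span_insert.mp hmem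
  obtain ⟨ci, rfl⟩ := Ideal.mem_span_range_iff_exists_fun.mp hz
  obtain ⟨S, N, hS, hN, hSt⟩ :=
    exists_cont_hasTopCoeff_combination (hF.hasTopCoeff hLB) hT hn hTt cl ci
  rw [← hcomb] at hSt
  set G := C d * (C c * ∏ i, p i ^ (e i - κ i))
  have hG : G ≠ 0 := mul_ne_zero (C_ne_zero.mpr hd) (hF.C_mul_prod_pow_ne_zero _)
  have hσG : (⇑O.σ)^[N - r] G ≠ 0 := by
    rw [← RingAut.coe_pow]; exact EmbeddingLike.map_ne_zero_iff.mpr hG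
  have hord := hSt.ord_eq hσG
  have htw : (⇑O.σ.symm)^[O.ord S - r] ((⇑O.σ)^[N - r] G) = G := by
    rw [hord]; exact Function.LeftInverse.iterate O.σ.symm_apply_apply _ G
  refine ⟨S, _, ⟨hS, hord ▸ hN, d, 1, κ, _, _, one_ne_zero, hκe, hSt.lc_eq hσG, hF.2.2.2.1,
    ?_, hκmax⟩, hSt.lc_eq hσG, by rwa [htw]⟩
  rw [htw, C_1, one_mul, mul_assoc, mul_assoc, prod_pow_sub_mul_prod_pow p hκe]

end Factored

end Existence

end OreAlg

theorem desing_constants_ideal_general {R : Type} [CommRing R] [IsDomain R]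
    [IsPrincipalIdealRing R] {A : Type} [Ring A] (O : OreAlg R A)
    (L : A) (hLB : O.InB L)
    (r m : ℕ) (c : R) (p : Fin m → Polynomial R) (e : Fin m → ℕ)
    (hF : O.Factored L r m c p e)
    (g : Polynomial R) (hg : g.IsPrimitive)
    (hgall : ∀ (T : A) (t : Polynomial R), O.Desing L r m c p e T →
      O.lc T = algebraMap (Polynomial R) (QX R) t →
      ∃ cT : R, (⇑O.σ.symm)^[O.ord T - r] t = C cT * g) :
    ((0 : R) ∈ O.DesingConsts L r m c p e g) ∧
    (∀ a b : R, a ∈ O.DesingConsts L r m c p e g →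
      b ∈ O.DesingConsts L r m c p e g → a + b ∈ O.DesingConsts L r m c p e g) ∧
    (∀ s a : R, a ∈ O.DesingConsts L r m c p e g →
      s * a ∈ O.DesingConsts L r m c p e g) ∧
    (∃ (Q : A) (qt : Polynomial R) (cQ : R),
      O.Desing L r m c p e Q ∧
      O.lc Q = algebraMap (Polynomial R) (QX R) qt ∧
      (⇑O.σ.symm)^[O.ord Q - r] qt = C cQ * g ∧
      ∀ c' ∈ O.DesingConsts L r m c p e g, cQ ∣ c') := by
  let J : Ideal R :=
    { carrier := O.DesingConsts L r m c p e g
      zero_mem' := Or.inl rfl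
      add_mem' := OreAlg.desingConsts_add hg.ne_zero
      smul_mem' := fun s _ => OreAlg.desingConsts_mul_left hF.2.1 s }
  refine ⟨J.zero_mem, fun _ _ => J.add_mem, fun s _ => J.mul_mem_left s, ?_⟩
  set d := Submodule.IsPrincipal.generator J
  have hdvd : ∀ c' ∈ O.DesingConsts L r m c p e g, d ∣ c' := fun _ =>
    (Submodule.IsPrincipal.mem_iff_generator_dvd J).mp
  obtain ⟨T, t, hT, ht, htw⟩ := hF.exists_desing hLB
  obtain ⟨cT, hcT⟩ := hgall T t hT ht
  have hd : d ≠ 0 := by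
    intro h
    have hcT0 := hdvd cT (Or.inr ⟨T, t, hT, ht, hcT⟩)
    rw [h, zero_dvd_iff] at hcT0
    exact htw (by rw [hcT, hcT0, C_0, zero_mul])
  obtain h0 | ⟨Q, qt, hQ, hqt, hQtw⟩ := Submodule.IsPrincipal.generator_mem J
  · exact absurd h0 hd
  · exact ⟨Q, qt, d, hQ, hqt, hQtw, hdvd⟩

/-- the set of constants `c_T` of desingularized operators (with
respect to the fixed primitive polynomial `g = ∏ pᵢ^{eᵢ-kᵢ}`) together with `0`
is an ideal of `R`; since `R` is a PID, there is a (completely desingularized)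
operator whose constant divides the constant of every desingularized operator. -/
theorem desing_constants_ideal {R : Type} [CommRing R] [IsDomain R]
    [IsPrincipalIdealRing R] {A : Type} [Ring A] (O : OreAlg R A)
    (L : A) (hL : L ≠ 0) (hLB : O.InB L)
    (r m : ℕ) (c : R) (p : Fin m → Polynomial R) (e : Fin m → ℕ)
    (hF : O.Factored L r m c p e)
    (g : Polynomial R) (hg : g.IsPrimitive)
    (hgall : ∀ (T : A) (t : Polynomial R), O.Desing L r m c p e T →
      O.lc T = algebraMap (Polynomial R) (QX R) t →
      ∃ cT : R, (⇑O.σ.symm)^[O.ord T - r] t = C cT * g) :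
    ((0 : R) ∈ O.DesingConsts L r m c p e g) ∧
    (∀ a b : R, a ∈ O.DesingConsts L r m c p e g →
      b ∈ O.DesingConsts L r m c p e g → a + b ∈ O.DesingConsts L r m c p e g) ∧
    (∀ s a : R, a ∈ O.DesingConsts L r m c p e g →
      s * a ∈ O.DesingConsts L r m c p e g) ∧
    (∃ (Q : A) (qt : Polynomial R) (cQ : R),
      O.Desing L r m c p e Q ∧
      O.lc Q = algebraMap (Polynomial R) (QX R) qt ∧
      (⇑O.σ.symm)^[O.ord Q - r] qt = C cQ * g ∧
      ∀ c' ∈ O.DesingConsts L r m c p e g, cQ ∣ c') :=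
  desing_constants_ideal_general O L hLB r m c p e hF g hg hgall
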